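/- Let S = {AA, CC, AC, CA, TC} ⊂ D^2. Every word of length 2n formed by concatenating n blocks from S is 3-SSA. -/

import Mathlib

inductive Base : Type
  | A | T | C | G
deriving DecidableEq, Repr

open Base

def bcompl : Base → Base
  | A => T
  | T => A
  | C => G
  | G => C

/-- Reverse-complement of a DNA word. -/
def RC (w : List Base) : List Base := w.reverse.map bcompl

/-- The contiguous factor of `x` starting at index `i` of length `k`. -/
def factor (x : List Base) (i k : ℕ) : List Base := (x.drop i).take k

/-- `x` is `m`-SSA: for all `k ≥ m` there is no pair of non-overlapping
contiguous factors of length `k`, one the reverse-complement of the other. -/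
def SSA (m : ℕ) (x : List Base) : Prop :=
  ∀ k, m ≤ k → ∀ i j, i + k ≤ x.length → j + k ≤ x.length →
    (i + k ≤ j ∨ j + k ≤ i) → factor x i k ≠ RC (factor x j k)

/-!
A concatenation of blocks from `S` contains no `G`, and each of its `T`s is immediately followed
by a `C`; both properties pass to factors. If `x = RC y` for two such words with `|y| ≥ 3`, then
`y` contains no `C` (it would give a `G` in `x`), so the second letter of `y` is `A`: it is not
`G`, not `C`, and not `T`, since a `T` would be followed by a `C`. Hence `x` ends with `T`
followed by the complement of the first letter of `y`, which must then be `C`, putting a `G`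
into `y`.
-/

def TFollowedByC (a b : Base) : Prop := a = T → b = C

instance : DecidableRel TFollowedByC := fun _ _ => inferInstanceAs (Decidable (_ → _))

@[simp]
theorem bcompl_bcompl (a : Base) : bcompl (bcompl a) = a := by
  cases a <;> rfl

@[simp]
theorem bcompl_eq_C_iff {a : Base} : bcompl a = C ↔ a = G := by
  cases a <;> decide

theorem mem_RC {a : Base} {w : List Base} : a ∈ RC w ↔ bcompl a ∈ w := by
  simp only [RC, List.mem_map, List.mem_reverse]
  exact ⟨fun ⟨b, hb, hba⟩ => hba ▸ (bcompl_bcompl b).symm ▸ hb,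
    fun h => ⟨_, h, bcompl_bcompl a⟩⟩

theorem RC_cons (a : Base) (w : List Base) : RC (a :: w) = RC w ++ [bcompl a] := by
  simp [RC]

theorem factor_isInfix (x : List Base) (i k : ℕ) : factor x i k <:+: x :=
  (List.take_prefix k _).isInfix.trans (List.drop_suffix i x).isInfix

theorem length_factor {x : List Base} {i k : ℕ} (h : i + k ≤ x.length) :
    (factor x i k).length = k := by
  simp only [factor, List.length_take, List.length_drop]
  omega

theorem ne_RC_of_isChain {x y : List Base} (hx : x.IsChain TFollowedByC)
    (hy : y.IsChain TFollowedByC) (hxG : G ∉ x) (hyG : G ∉ y) (hy3 : 3 ≤ y.length) :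
    x ≠ RC y := by
  rintro rfl
  obtain ⟨a, b, c, l, rfl⟩ : ∃ a b c l, y = a :: b :: c :: l := by
    match y, hy3 with
    | a :: b :: c :: l, _ => exact ⟨a, b, c, l, rfl⟩
  have hyC : C ∉ a :: b :: c :: l := fun h => hxG (mem_RC.2 h)
  have hb : b = A := by
    have hbc : TFollowedByC b c := (List.isChain_cons_cons.1 hy.tail).1
    cases b
    · rfl
    · exact (hyC (by simp [hbc rfl])).elim
    · exact (hyC (by simp)).elim
    · exact (hyG (by simp)).elim
  have hTa : TFollowedByC T (bcompl a) := by
    simp only [RC_cons, hb, List.append_assoc, List.singleton_append] at hx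
    exact List.isChain_pair.1 (List.isChain_cons_cons.1 hx.right_of_append).2
  exact hyG (bcompl_eq_C_iff.1 (hTa rfl) ▸ List.mem_cons_self)

theorem factor_ne_RC_factor {w : List Base} (hw : w.IsChain TFollowedByC) (hG : G ∉ w)
    {i j k : ℕ} (hk : 3 ≤ k) (hjk : j + k ≤ w.length) :
    factor w i k ≠ RC (factor w j k) :=
  ne_RC_of_isChain (hw.infix (factor_isInfix w i k)) (hw.infix (factor_isInfix w j k))
    (fun h => hG ((factor_isInfix w i k).subset h)) (fun h => hG ((factor_isInfix w j k).subset h))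
    (by rw [length_factor hjk]; exact hk)

theorem isChain_flatten_TFollowedByC {bs : List (List Base)}
    (h : ∀ b ∈ bs, b.IsChain TFollowedByC ∧ T ∉ b.getLast?) :
    bs.flatten.IsChain TFollowedByC := by
  induction bs with
  | nil => exact .nil
  | cons b bs ih =>
    rw [List.forall_mem_cons] at h
    exact h.1.1.append (ih h.2) fun x hx _ _ hxT => absurd (hxT ▸ hx) h.1.2

open Base in
theorem stmt6_general (bs : List (List Base))
    (hS : ∀ b ∈ bs, b ∈ ([[A,A],[C,C],[A,C],[C,A],[T,C]] : List (List Base))) :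
    SSA 3 bs.flatten := by
  have hblock : ∀ b ∈ ([[A,A],[C,C],[A,C],[C,A],[T,C]] : List (List Base)),
      b.IsChain TFollowedByC ∧ T ∉ b.getLast? ∧ G ∉ b := by decide
  have hG : G ∉ bs.flatten := by
    simp only [List.mem_flatten, not_exists, not_and]
    exact fun b hb => (hblock b (hS b hb)).2.2
  intro k hk i j _ hjk _
  exact factor_ne_RC_factor
    (isChain_flatten_TFollowedByC fun b hb => (hblock b (hS b hb)).imp_right And.left) hG
    hk hjk

open Base in
theorem stmt6 (n : ℕ) (bs : List (List Base)) (hn : bs.length = n)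
    (hS : ∀ b ∈ bs, b ∈ ([[A,A],[C,C],[A,C],[C,A],[T,C]] : List (List Base))) :
    SSA 3 bs.flatten :=
  stmt6_general bs hS
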